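/- Let V be a 2N-dimensional symplectic vector space with form ω̄, and let sp(V) have the elements f^{ij}, f_{ij} as defined. Then the identity Σ_{i,j=1}^{2N} ω_{ij} [f^{ia}, f^{jb}] = -(N+1) f^{ab} holds in sp(V) for all 1 ≤ a,b ≤ 2N. -/

import Mathlib

open scoped BigOperators

namespace SpSetup

variable {k : Type*} [Field k] [CharZero k]
variable {V : Type*} [AddCommGroup V] [Module k V] [FiniteDimensional k V]
variable {N : ℕ}

/-- `∂^i = Σ_j r^{ij} ∂_j`. -/
noncomputable def dualVec (b : Module.Basis (Fin (2 * N)) k V) (r : Fin (2 * N) → Fin (2 * N) → k)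
    (i : Fin (2 * N)) : V := ∑ j, r i j • b j

/-- `e^{ij} = ∂^i ⊗ x^j ∈ End V`. -/
noncomputable def E (b : Module.Basis (Fin (2 * N)) k V) (r : Fin (2 * N) → Fin (2 * N) → k)
    (i j : Fin (2 * N)) : Module.End k V :=
  LinearMap.smulRight (b.coord j) (dualVec b r i)

/-- `f^{ij} = -(1/2)(e^{ij} + e^{ji})`. -/
noncomputable def F (b : Module.Basis (Fin (2 * N)) k V) (r : Fin (2 * N) → Fin (2 * N) → k)
    (i j : Fin (2 * N)) : Module.End k V :=
  (-(2 : k)⁻¹) • (E b r i j + E b r j i)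

end SpSetup

open SpSetup

/-!
With `r` the inverse of the skew matrix `ω`, `r` is skew too, and then
`[f^{ij}, f^{kl}] = ½ (r^{ik} f^{jl} + r^{il} f^{jk} + r^{jk} f^{il} + r^{jl} f^{ik})`.
Contracting with `ω` leaves `Σ ω_{ij} r^{ij} = -2N`, `Σ_i ω_{ij} r^{ic} = -δ_j^c`,
`Σ_j ω_{ij} r^{aj} = -δ_i^a` and `Σ ω_{ij} f^{ij} = 0` (as `Σ ω_{ij} e^{ij} = -1` and
`Σ ω_{ij} e^{ji} = 1`), so the sum is `½ (-2N - 1 - 1) f^{ac}`.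
-/

namespace Matrix

theorem transpose_eq_neg_of_mul_eq_one {ι R : Type*} [Fintype ι] [DecidableEq ι]
    [CommRing R] {Ω A : Matrix ι ι R} (hΩ : Ωᵀ = -Ω) (hΩA : Ω * A = 1) : Aᵀ = -A :=
  calc Aᵀ = Aᵀ * (Ω * A) := by rw [hΩA, Matrix.mul_one]
    _ = -(Ω * A)ᵀ * A := by
      rw [transpose_mul, hΩ, Matrix.mul_neg, neg_neg, Matrix.mul_assoc]
    _ = -A := by rw [hΩA, Matrix.transpose_one, Matrix.neg_mul, Matrix.one_mul]

end Matrix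

section Contraction

variable {ι R M : Type*} [Fintype ι] [DecidableEq ι] [CommRing R] [AddCommGroup M] [Module R M]
  {Ω A : ι → ι → R}

theorem swap_eq_neg_of_sum_mul_eq_ite (hΩ : ∀ i j, Ω j i = -Ω i j)
    (hΩA : ∀ i l, ∑ j, Ω i j * A j l = if i = l then 1 else 0) (i j : ι) :
    A j i = -A i j := by
  have h := Matrix.transpose_eq_neg_of_mul_eq_one (Ω := Matrix.of Ω) (A := Matrix.of A)
    (by ext i j; exact hΩ i j) (by ext i l; simp [Matrix.mul_apply, Matrix.one_apply, hΩA])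
  simpa using congrFun₂ h i j

theorem sum_sum_smul_smul_col (hΩ : ∀ i j, Ω j i = -Ω i j)
    (hΩA : ∀ i l, ∑ j, Ω i j * A j l = if i = l then 1 else 0) (X : ι → M) (c : ι) :
    ∑ i, ∑ j, Ω i j • A i c • X j = -X c := by
  have h : ∀ j, ∑ i, Ω i j * A i c = -if j = c then 1 else 0 := fun j => by
    simp only [hΩ j, neg_mul, Finset.sum_neg_distrib, hΩA]
  rw [Finset.sum_comm]
  simp only [smul_smul, ← Finset.sum_smul, h, neg_smul, ite_smul, one_smul, zero_smul,
    Finset.sum_neg_distrib, Finset.sum_ite_eq', Finset.mem_univ, if_true]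

theorem sum_sum_smul_smul_row (hA : ∀ i j, A j i = -A i j)
    (hΩA : ∀ i l, ∑ j, Ω i j * A j l = if i = l then 1 else 0) (X : ι → M) (a : ι) :
    ∑ i, ∑ j, Ω i j • A a j • X i = -X a := by
  have h : ∀ i, ∑ j, Ω i j * A a j = -if i = a then 1 else 0 := fun i => by
    simp only [fun j => hA j a, mul_neg, Finset.sum_neg_distrib, hΩA]
  simp only [smul_smul, ← Finset.sum_smul, h, neg_smul, ite_smul, one_smul, zero_smul,
    Finset.sum_neg_distrib, Finset.sum_ite_eq', Finset.mem_univ, if_true]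

theorem sum_sum_smul_smul_diag (hA : ∀ i j, A j i = -A i j)
    (hΩA : ∀ i l, ∑ j, Ω i j * A j l = if i = l then 1 else 0) (x : M) :
    ∑ i, ∑ j, Ω i j • A i j • x = -((Fintype.card ι : R) • x) := by
  have h : ∀ i, ∑ j, Ω i j * A i j = -1 := fun i => by
    simp only [fun j => hA j i, mul_neg, Finset.sum_neg_distrib, hΩA, if_true]
  simp only [smul_smul, ← Finset.sum_smul, h, neg_smul, one_smul, Finset.sum_neg_distrib,
    Finset.sum_const, Finset.card_univ, Nat.cast_smul_eq_nsmul]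

end Contraction

namespace SpSetup

variable {k : Type*} [Field k] {V : Type*} [AddCommGroup V] [Module k V] {N : ℕ}
  (b : Module.Basis (Fin (2 * N)) k V) (r : Fin (2 * N) → Fin (2 * N) → k)

theorem E_mul (i j p q : Fin (2 * N)) : E b r i j * E b r p q = r p j • E b r i q := by
  ext v
  simp [E, Module.End.mul_apply, Module.Basis.coord_apply, dualVec, Finsupp.single_apply,
    smul_smul, mul_comm]

theorem lie_F (hr : ∀ i j, r j i = -r i j) (i j p q : Fin (2 * N)) :
    ⁅F b r i j, F b r p q⁆ = (2 : k)⁻¹ •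
      (r i p • F b r j q + r i q • F b r j p + r j p • F b r i q + r j q • F b r i p) := by
  simp only [F, Ring.lie_def, add_mul, mul_add, smul_mul_assoc, mul_smul_comm, E_mul,
    hr i p, hr i q, hr j p, hr j q]
  module

/-- `2⁻¹ * 2 = 1` fails in characteristic `2`, where however `F` vanishes. -/
theorem inv_two_mul_two_smul_F (i j : Fin (2 * N)) :
    ((2 : k)⁻¹ * 2) • F b r i j = F b r i j := by
  have h := mul_inv_mul_cancel (2 : k)⁻¹
  rw [inv_inv] at h
  rw [F, smul_smul, mul_neg, h]

theorem sum_smul_dualVec {Ω : Fin (2 * N) → Fin (2 * N) → k}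
    (hΩr : ∀ i l, ∑ j, Ω i j * r j l = if i = l then 1 else 0) (i : Fin (2 * N)) :
    ∑ j, Ω i j • dualVec b r j = b i := by
  simp only [dualVec, Finset.smul_sum, smul_smul]
  rw [Finset.sum_comm]
  simp only [← Finset.sum_smul, hΩr, ite_smul, one_smul, zero_smul, Finset.sum_ite_eq,
    Finset.mem_univ, if_true]

theorem sum_smul_E_swap {Ω : Fin (2 * N) → Fin (2 * N) → k}
    (hΩr : ∀ i l, ∑ j, Ω i j * r j l = if i = l then 1 else 0) :
    ∑ i, ∑ j, Ω i j • E b r j i = 1 := by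
  ext v
  simp only [LinearMap.sum_apply, LinearMap.smul_apply, E, LinearMap.smulRight_apply,
    smul_comm (Ω _ _), ← Finset.smul_sum, sum_smul_dualVec b r hΩr]
  exact b.sum_repr v

theorem sum_smul_F {Ω : Fin (2 * N) → Fin (2 * N) → k} (hΩ : ∀ i j, Ω j i = -Ω i j)
    (hΩr : ∀ i l, ∑ j, Ω i j * r j l = if i = l then 1 else 0) :
    ∑ i, ∑ j, Ω i j • F b r i j = 0 := by
  have hE : ∑ i, ∑ j, Ω i j • E b r i j = -1 := by
    rw [← sum_smul_E_swap b r hΩr, ← Finset.sum_neg_distrib, Finset.sum_comm]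
    refine Finset.sum_congr rfl fun i _ => ?_
    simp only [hΩ i, neg_smul, Finset.sum_neg_distrib]
  simp only [F, smul_comm (Ω _ _), ← Finset.smul_sum, smul_add, Finset.sum_add_distrib, hE,
    sum_smul_E_swap b r hΩr, smul_neg, neg_add_cancel]

end SpSetup

open SpSetup

theorem sp_omega_bracket_sum_general {k : Type*} [Field k]
    {V : Type*} [AddCommGroup V] [Module k V]
    (N : ℕ) (ω : V →ₗ[k] V →ₗ[k] k) (hskew : ∀ u v : V, ω u v = -ω v u)
    (b : Module.Basis (Fin (2 * N)) k V) (r : Fin (2 * N) → Fin (2 * N) → k)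
    (hr' : ∀ i l : Fin (2 * N),
      (∑ j, ω (b i) (b j) * r j l) = if i = l then 1 else 0)
    (a c : Fin (2 * N)) :
    (∑ i, ∑ j, ω (b i) (b j) • ⁅F b r i a, F b r j c⁆) =
      (-((N : k) + 1)) • F b r a c := by
  have hΩ : ∀ i j, ω (b j) (b i) = -ω (b i) (b j) := fun i j => hskew _ _
  have hr : ∀ i j, r j i = -r i j := swap_eq_neg_of_sum_mul_eq_ite hΩ hr'
  calc (∑ i, ∑ j, ω (b i) (b j) • ⁅F b r i a, F b r j c⁆)
      = (2 : k)⁻¹ • ((∑ i, ∑ j, ω (b i) (b j) • r i j • F b r a c)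
          + (∑ i, ∑ j, ω (b i) (b j) • r i c • F b r a j)
          + (∑ i, ∑ j, ω (b i) (b j) • r a j • F b r i c)
          + r a c • ∑ i, ∑ j, ω (b i) (b j) • F b r i j) := by
        simp only [lie_F b r hr, smul_comm (ω _ _) (2 : k)⁻¹, ← Finset.smul_sum, smul_add,
          Finset.sum_add_distrib, smul_comm (ω _ _) (r a c)]
    _ = (2 : k)⁻¹ •
          (-(((2 * N : ℕ) : k) • F b r a c) + -F b r a c + -F b r a c + r a c • 0) := by
        rw [sum_sum_smul_smul_diag hr hr', sum_sum_smul_smul_col hΩ hr',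
          sum_sum_smul_smul_row hr hr', sum_smul_F b r hΩ hr', Fintype.card_fin]
    _ = (-((N : k) + 1)) • (((2 : k)⁻¹ * 2) • F b r a c) := by
        push_cast
        module
    _ = (-((N : k) + 1)) • F b r a c := by rw [inv_two_mul_two_smul_F]

/-- Let `V` be a `2N`-dimensional symplectic vector space with form `ω̄`,
and `f^{ij} ∈ sp(V)` as defined.  Then
`Σ_{i,j=1}^{2N} ω_{ij} [f^{ia}, f^{jb}] = -(N+1) f^{ab}` for all `1 ≤ a,b ≤ 2N`. -/
theorem sp_omega_bracket_sum {k : Type*} [Field k] [CharZero k]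
    {V : Type*} [AddCommGroup V] [Module k V] [FiniteDimensional k V]
    (N : ℕ) (ω : V →ₗ[k] V →ₗ[k] k) (hskew : ∀ u v : V, ω u v = -ω v u)
    (b : Module.Basis (Fin (2 * N)) k V) (r : Fin (2 * N) → Fin (2 * N) → k)
    (hr : ∀ i l : Fin (2 * N),
      (∑ j, r i j * ω (b j) (b l)) = if i = l then 1 else 0)
    (hr' : ∀ i l : Fin (2 * N),
      (∑ j, ω (b i) (b j) * r j l) = if i = l then 1 else 0)
    (a c : Fin (2 * N)) :
    (∑ i, ∑ j, ω (b i) (b j) • ⁅F b r i a, F b r j c⁆) =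
      (-((N : k) + 1)) • F b r a c :=
  sp_omega_bracket_sum_general N ω hskew b r hr' a c
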